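/- The map f preserves Lebesgue measure on [0, √2): f is Lebesgue measurable, and the pushforward under f of Lebesgue measure restricted to [0, √2) equals Lebesgue measure restricted to [0, √2); equivalently, for every Borel set A ⊆ [0, √2), the Lebesgue measure of f⁻¹(A) ∩ [0, √2) equals the Lebesgue measure of A. -/

import Mathlib

noncomputable section

/-- `β = √2 - 1`. -/
def β : ℝ := Real.sqrt 2 - 1

/-- `ω = √2 + 1`. -/
def ω : ℝ := Real.sqrt 2 + 1

/-- The break points `Δ_i`. -/
def Δ (i : ℤ) : ℝ :=
  if i < 0 then β ^ i.natAbs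
  else if i = 0 then β
  else Real.sqrt 2 - β ^ i.natAbs

/-- The intervals `I_i`. -/
def Iint (i : ℤ) : Set ℝ :=
  if i < 0 then Set.Ioc (Δ (i - 1)) (Δ i)
  else if i = 0 then Set.Ioo β 1
  else Set.Ico (Δ i) (Δ (i + 1))

/-- The defining formula of `f` on the interval `I_i`. -/
def fval (i : ℤ) (s : ℝ) : ℝ :=
  if i < 0 then ω ^ (i.natAbs + 1) * (Δ i - s)
  else if i = 0 then ω * (s - β)
  else ω ^ (i.natAbs + 1) * (s - Δ i)

/-- `f` is the renormalization map: `f 0 = f √2 = 0` and on each interval `I_i`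
    it is given by the corresponding affine formula. These conditions determine
    `f` uniquely on `[0, √2]`. -/
def IsLuroth (f : ℝ → ℝ) : Prop :=
  f 0 = 0 ∧ f (Real.sqrt 2) = 0 ∧ ∀ i : ℤ, ∀ s ∈ Iint i, f s = fval i s

/-- `ℚ(√2)` as a subset of `ℝ`. -/
def QSqrt2 : Set ℝ := {x | ∃ a b : ℚ, x = (a : ℝ) + (b : ℝ) * Real.sqrt 2}

/-- `ℤ[√2]` as a subset of `ℝ`. -/
def ZSqrt2 : Set ℝ := {x | ∃ m n : ℤ, x = (m : ℝ) + (n : ℝ) * Real.sqrt 2}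

/-- `M_d = {s ∈ [0,√2] : d·s ∈ ℤ[√2]}`. -/
def Mset (d : ℤ) : Set ℝ :=
  {s | s ∈ Set.Icc 0 (Real.sqrt 2) ∧ (d : ℝ) * s ∈ ZSqrt2}

open MeasureTheory
open Set
open scoped ENNReal

/-! Each branch `fval i` maps the closure of `I_i` affinely onto `[0, √2]` with slope `±ω^(|i|+1)`,
so it pulls a Borel set `A ⊆ [0, √2)` back to a set of measure `β^(|i|+1) · vol A`. Up to the
countable set of break points the intervals `I_i` tile `[0, √2)`, so their lengths
`√2 β^(|i|+1)` add up to `√2`, i.e. `∑ β^(|i|+1) = 1`, and summing over the branches gives `vol A`. -/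

lemma β_pos : 0 < β := by
  unfold β; linarith [Real.one_lt_sqrt_two]

lemma β_lt_one : β < 1 := by
  unfold β; linarith [Real.sqrt_two_lt_three_halves]

lemma ω_pos : 0 < ω := by
  unfold ω; positivity

lemma β_pow_mul_ω_pow (k : ℕ) : β ^ k * ω ^ k = 1 := by
  rw [← mul_pow, show β * ω = 1 by unfold β ω; ring_nf; norm_num, one_pow]

lemma one_sub_β : 1 - β = √2 * β := by
  unfold β; ring_nf; norm_num; ring

/-- The left endpoint of `I_i`: `Δ_(i-1)` for `i ≤ 0` and `Δ_i` for `i > 0`. -/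
def leftEnd (i : ℤ) : ℝ := if i ≤ 0 then β ^ (1 - i).toNat else √2 - β ^ i.toNat

lemma leftEnd_of_nonpos {i : ℤ} (hi : i ≤ 0) : leftEnd i = Δ (i - 1) := by
  rw [leftEnd, Δ, if_pos hi, if_pos (by omega)]
  congr 1; omega

lemma leftEnd_of_pos {i : ℤ} (hi : 0 < i) : leftEnd i = Δ i := by
  rw [leftEnd, Δ, if_neg (by omega), if_neg (by omega), if_neg (by omega)]
  congr 2; omega

lemma leftEnd_one : leftEnd 1 = 1 := by
  simp [leftEnd, β]

lemma leftEnd_succ_sub (i : ℤ) : leftEnd (i + 1) - leftEnd i = √2 * β ^ (i.natAbs + 1) := by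
  rcases lt_trichotomy i 0 with hi | rfl | hi
  · obtain ⟨n, rfl⟩ : ∃ n : ℕ, i = -(n + 1 : ℕ) := ⟨i.natAbs - 1, by omega⟩
    rw [leftEnd, leftEnd, if_pos (by omega), if_pos (by omega),
      show (1 - (-((n + 1 : ℕ) : ℤ) + 1)).toNat = n + 1 by omega,
      show (1 - -((n + 1 : ℕ) : ℤ)).toNat = n + 2 by omega,
      show (-((n + 1 : ℕ) : ℤ)).natAbs = n + 1 by omega]
    linear_combination β ^ (n + 1) * one_sub_β
  · rw [zero_add, leftEnd_one, leftEnd, if_pos le_rfl]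
    simpa using one_sub_β
  · obtain ⟨n, rfl⟩ : ∃ n : ℕ, i = n := ⟨i.natAbs, by omega⟩
    rw [leftEnd, leftEnd, if_neg (by omega), if_neg (by omega),
      show ((n : ℤ) + 1).toNat = n + 1 by omega, Int.toNat_natCast, Int.natAbs_natCast]
    linear_combination β ^ n * one_sub_β

lemma leftEnd_strictMono : StrictMono leftEnd :=
  strictMono_int_of_lt_succ fun i => by
    have hlen := leftEnd_succ_sub i
    have hpos : 0 < √2 * β ^ (i.natAbs + 1) := by have := β_pos; positivity
    linarith

lemma leftEnd_mem_Ioo (i : ℤ) : leftEnd i ∈ Ioo 0 √2 := by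
  have h1 : ∀ n : ℕ, β ^ n ≤ 1 := fun n => pow_le_one₀ β_pos.le β_lt_one.le
  have h2 : ∀ n : ℕ, 0 < β ^ n := fun n => pow_pos β_pos n
  have := Real.one_lt_sqrt_two
  unfold leftEnd
  split_ifs
  · exact ⟨h2 _, by linarith [h1 ((1 - i).toNat)]⟩
  · exact ⟨by linarith [h1 i.toNat], by linarith [h2 i.toNat]⟩

lemma Ioo_leftEnd_subset_Iint (i : ℤ) : Ioo (leftEnd i) (leftEnd (i + 1)) ⊆ Iint i := by
  rcases lt_trichotomy i 0 with hi | rfl | hi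
  · rw [Iint, if_pos hi, leftEnd_of_nonpos hi.le, leftEnd_of_nonpos (by omega), add_sub_cancel_right]
    exact Ioo_subset_Ioc_self
  · rw [Iint, if_neg (lt_irrefl 0), if_pos rfl, zero_add, leftEnd_one,
      leftEnd_of_nonpos le_rfl, zero_sub, Δ, if_pos (by norm_num)]
    simp
  · rw [Iint, if_neg (by omega), if_neg (by omega), leftEnd_of_pos hi, leftEnd_of_pos (by omega)]
    exact Ioo_subset_Ico_self

lemma Int.exists_mem_Ico_of_monotone {α : Type*} [LinearOrder α] {u : ℤ → α} (hu : Monotone u)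
    {x : α} (hlo : ∃ i, u i ≤ x) (hhi : ∃ j, x < u j) : ∃ k, x ∈ Ico (u k) (u (k + 1)) := by
  obtain ⟨j, hj⟩ := hhi
  obtain ⟨k, hk, hmax⟩ := Int.exists_greatest_of_bdd
    ⟨j, fun z hz => (hu.reflect_lt (hz.trans_lt hj)).le⟩ hlo
  exact ⟨k, hk, lt_of_not_ge fun h => by have := hmax _ h; omega⟩

lemma exists_leftEnd_le {x : ℝ} (hx : 0 < x) : ∃ i, leftEnd i ≤ x := by
  obtain ⟨n, hn⟩ := exists_pow_lt_of_lt_one hx β_lt_one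
  refine ⟨-n, ?_⟩
  rw [leftEnd, if_pos (by omega), show (1 - -(n : ℤ)).toNat = n + 1 by omega]
  exact (pow_le_pow_of_le_one β_pos.le β_lt_one.le n.le_succ).trans hn.le

lemma exists_lt_leftEnd {x : ℝ} (hx : x < √2) : ∃ j, x < leftEnd j := by
  obtain ⟨n, hn⟩ := exists_pow_lt_of_lt_one (sub_pos.2 hx) β_lt_one
  refine ⟨n + 1, ?_⟩
  rw [leftEnd, if_neg (by omega), show ((n : ℤ) + 1).toNat = n + 1 by omega]
  linarith [pow_le_pow_of_le_one β_pos.le β_lt_one.le (Nat.le_add_right n 1)]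

def breakPoints : Set ℝ := insert 0 (range leftEnd)

lemma breakPoints_countable : breakPoints.Countable :=
  (countable_range leftEnd).insert 0

lemma Ico_eq_breakPoints_union :
    Ico 0 √2 = (Ico 0 √2 ∩ breakPoints) ∪ ⋃ i, Ioo (leftEnd i) (leftEnd (i + 1)) := by
  refine Subset.antisymm (fun x hx => ?_) (union_subset inter_subset_left
    (iUnion_subset fun i => (Ioo_subset_Ioo (leftEnd_mem_Ioo i).1.le
      (leftEnd_mem_Ioo (i + 1)).2.le).trans Ioo_subset_Ico_self))
  by_cases hxE : x ∈ breakPoints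
  · exact Or.inl ⟨hx, hxE⟩
  obtain ⟨hx0, hxne⟩ : x ≠ 0 ∧ x ∉ range leftEnd := not_or.1 hxE
  obtain ⟨k, hk⟩ := Int.exists_mem_Ico_of_monotone leftEnd_strictMono.monotone
    (exists_leftEnd_le (lt_of_le_of_ne hx.1 (Ne.symm hx0))) (exists_lt_leftEnd hx.2)
  exact Or.inr (mem_iUnion.2 ⟨k, lt_of_le_of_ne hk.1 fun h => hxne ⟨k, h⟩, hk.2⟩)

lemma iUnion_Ioo_leftEnd_ae_eq : (⋃ i, Ioo (leftEnd i) (leftEnd (i + 1))) =ᵐ[volume] Ico 0 √2 := by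
  conv_rhs => rw [Ico_eq_breakPoints_union]
  exact (union_ae_eq_right_of_ae_eq_empty (ae_eq_empty.2
    ((breakPoints_countable.mono inter_subset_right).measure_zero _))).symm

lemma pairwise_disjoint_Ioo_leftEnd :
    Pairwise (Function.onFun Disjoint fun i => Ioo (leftEnd i) (leftEnd (i + 1))) := by
  simpa [Order.succ_eq_add_one] using leftEnd_strictMono.monotone.pairwise_disjoint_on_Ioo_succ

lemma tsum_ofReal_β_pow : ∑' i : ℤ, ENNReal.ofReal (β ^ (i.natAbs + 1)) = 1 := by
  have h := measure_congr iUnion_Ioo_leftEnd_ae_eq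
  rw [measure_iUnion pairwise_disjoint_Ioo_leftEnd fun _ => measurableSet_Ioo] at h
  simp_rw [Real.volume_Ioo, leftEnd_succ_sub, ENNReal.ofReal_mul (Real.sqrt_nonneg 2),
    ENNReal.tsum_mul_left, Real.volume_Ico, sub_zero] at h
  have h0 : ENNReal.ofReal √2 ≠ 0 := by simp
  exact (ENNReal.mul_right_inj h0 ENNReal.ofReal_ne_top).1 (h.trans (mul_one _).symm)

lemma fval_eq (i : ℤ) (s : ℝ) :
    fval i s = ω ^ (i.natAbs + 1) * (if i < 0 then leftEnd (i + 1) - s else s - leftEnd i) := by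
  rcases lt_trichotomy i 0 with hi | rfl | hi
  · rw [fval, if_pos hi, if_pos hi, leftEnd_of_nonpos (by omega), add_sub_cancel_right]
  · simp [fval, leftEnd, β]
  · rw [fval, if_neg (by omega), if_neg (by omega), if_neg (by omega), leftEnd_of_pos hi]

lemma mem_Icc_of_ω_pow_mul_mem_Icc {k : ℕ} {y : ℝ} (h : ω ^ k * y ∈ Icc 0 √2) :
    y ∈ Icc 0 (√2 * β ^ k) := by
  have hω : 0 < ω ^ k := pow_pos ω_pos k
  refine ⟨nonneg_of_mul_nonneg_right h.1 hω, ?_⟩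
  calc y = β ^ k * (ω ^ k * y) := by rw [← mul_assoc, β_pow_mul_ω_pow, one_mul]
    _ ≤ β ^ k * √2 := mul_le_mul_of_nonneg_left h.2 (pow_nonneg β_pos.le k)
    _ = √2 * β ^ k := mul_comm _ _

lemma mem_Icc_of_fval_mem_Icc {i : ℤ} {s : ℝ} (h : fval i s ∈ Icc 0 √2) :
    s ∈ Icc (leftEnd i) (leftEnd (i + 1)) := by
  rw [fval_eq] at h
  have hlen := leftEnd_succ_sub i
  have hy := mem_Icc_of_ω_pow_mul_mem_Icc h
  split_ifs at hy <;> exact ⟨by linarith [hy.1, hy.2], by linarith [hy.1, hy.2]⟩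

lemma volume_preimage_affine {c : ℝ} (hc : c ≠ 0) (d : ℝ) (A : Set ℝ) :
    volume ((fun s => c * (s - d)) ⁻¹' A) = ENNReal.ofReal |c⁻¹| * volume A := by
  rw [show (fun s => c * (s - d)) = (c * ·) ∘ (· + -d) by ext; simp [sub_eq_add_neg],
    preimage_comp, measure_preimage_add_right, Real.volume_preimage_mul_left hc]

lemma volume_preimage_fval (i : ℤ) (A : Set ℝ) :
    volume (fval i ⁻¹' A) = ENNReal.ofReal (β ^ (i.natAbs + 1)) * volume A := by
  set k := i.natAbs + 1
  have hω : 0 < ω ^ k := pow_pos ω_pos k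
  obtain ⟨c, d, hc, hfval⟩ : ∃ c d : ℝ, |c| = ω ^ k ∧ fval i = fun s => c * (s - d) := by
    by_cases hi : i < 0
    · exact ⟨-ω ^ k, leftEnd (i + 1), by rw [abs_neg, abs_of_pos hω],
        funext fun s => by rw [fval_eq, if_pos hi]; ring⟩
    · exact ⟨ω ^ k, leftEnd i, abs_of_pos hω, funext fun s => by rw [fval_eq, if_neg hi]⟩
  rw [hfval, volume_preimage_affine (abs_pos.1 (hc ▸ hω)) d, abs_inv, hc,
    ← eq_inv_of_mul_eq_one_left (β_pow_mul_ω_pow k)]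

lemma measurable_fval (i : ℤ) : Measurable (fval i) := by
  unfold fval
  split_ifs <;> fun_prop

lemma volume_preimage_fval_inter_Ioo {A : Set ℝ} (hA : A ⊆ Icc 0 √2) (i : ℤ) :
    volume (fval i ⁻¹' A ∩ Ioo (leftEnd i) (leftEnd (i + 1)))
      = ENNReal.ofReal (β ^ (i.natAbs + 1)) * volume A := by
  rw [measure_congr ((ae_eq_refl _).inter Ioo_ae_eq_Icc),
    inter_eq_left.2 fun s (hs : s ∈ fval i ⁻¹' A) => mem_Icc_of_fval_mem_Icc (hA hs),
    volume_preimage_fval]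

section IsLuroth

variable {f : ℝ → ℝ} (hf : IsLuroth f)
include hf

lemma preimage_inter_Ico_eq (B : Set ℝ) :
    f ⁻¹' B ∩ Ico 0 √2 = (f ⁻¹' B ∩ (Ico 0 √2 ∩ breakPoints)) ∪
      ⋃ i, fval i ⁻¹' B ∩ Ioo (leftEnd i) (leftEnd (i + 1)) := by
  conv_lhs => rw [Ico_eq_breakPoints_union]
  rw [inter_union_distrib_left, inter_iUnion]
  congr! 3 with i
  ext s
  refine and_congr_left fun hs => ?_
  rw [mem_preimage, mem_preimage, hf.2.2 i s (Ioo_leftEnd_subset_Iint i hs)]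

lemma measurableSet_preimage_inter_Ico {B : Set ℝ} (hB : MeasurableSet B) :
    MeasurableSet (f ⁻¹' B ∩ Ico 0 √2) := by
  rw [preimage_inter_Ico_eq hf]
  exact (breakPoints_countable.mono (inter_subset_right.trans inter_subset_right)).measurableSet
    |>.union (.iUnion fun i => (measurable_fval i hB).inter measurableSet_Ioo)

lemma volume_preimage_inter_Ico {A : Set ℝ} (hA : MeasurableSet A) (hA_sub : A ⊆ Icc 0 √2) :
    volume (f ⁻¹' A ∩ Ico 0 √2) = volume A := by
  have hnull : (f ⁻¹' A ∩ (Ico 0 √2 ∩ breakPoints) : Set ℝ) =ᵐ[volume] (∅ : Set ℝ) :=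
    ae_eq_empty.2 <|
      (breakPoints_countable.mono (inter_subset_right.trans inter_subset_right)).measure_zero _
  rw [preimage_inter_Ico_eq hf, measure_congr (union_ae_eq_right_of_ae_eq_empty hnull),
    measure_iUnion (pairwise_disjoint_Ioo_leftEnd.mono fun i j h =>
      h.mono inter_subset_right inter_subset_right)
      fun i => MeasurableSet.inter (measurable_fval i hA) measurableSet_Ioo]
  simp_rw [volume_preimage_fval_inter_Ioo hA_sub]
  rw [ENNReal.tsum_mul_right, tsum_ofReal_β_pow, one_mul]

end IsLuroth

/-- `f` preserves Lebesgue measure on `[0,√2)`: the restriction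
of `f` to `[0,√2)` is measurable and, for every Borel set `A ⊆ [0,√2)`,
the Lebesgue measure of `f⁻¹(A) ∩ [0,√2)` equals that of `A`. -/
theorem luroth_measure_preserving (f : ℝ → ℝ) (hf : IsLuroth f) :
    Measurable ((Set.Ico (0 : ℝ) (Real.sqrt 2)).restrict f) ∧
    ∀ A : Set ℝ, MeasurableSet A → A ⊆ Set.Ico (0 : ℝ) (Real.sqrt 2) →
      volume (f ⁻¹' A ∩ Set.Ico (0 : ℝ) (Real.sqrt 2)) = volume A := by
  refine ⟨fun B hB => ?_, fun A hA hA_sub =>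
    volume_preimage_inter_Ico hf hA (hA_sub.trans Ico_subset_Icc_self)⟩
  change MeasurableSet (((↑) : Ico 0 √2 → ℝ) ⁻¹' (f ⁻¹' B))
  rw [← Subtype.preimage_coe_inter_self]
  exact measurable_subtype_coe (measurableSet_preimage_inter_Ico hf hB)
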